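/- arXiv:1205.1754 — 3 statements merged into one kernel-verified Lean document; each statement's English description precedes it below -/
import Mathlib

section
/- Fix n ≥ 1 and set ρ_j := n+1−j for j = 2,…,n+1. Let a₂ > a₃ > … > a_n > a_{n+1} ≥ 0 be integers. Then the rational number ∏_{2 ≤ p < q ≤ n+1} (a_p² − a_q²) / ∏_{2 ≤ p < q ≤ n+1} (ρ_p² − ρ_q²) is a positive integer. -/
open Finset

namespace WeylDimAux

open Polynomial Matrix

/-- Cast of `descFactorial` to `ℚ` as a product (holds unconditionally). -/
lemma cast_descFactorial (N m : ℕ) :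
    (N.descFactorial m : ℚ) = ∏ i ∈ range m, ((N : ℚ) - i) := by
  rcases le_or_gt m N with h | h
  · rw [Nat.descFactorial_eq_prod_range, Nat.cast_prod]
    refine Finset.prod_congr rfl fun i hi => ?_
    rw [Finset.mem_range] at hi
    rw [Nat.cast_sub (by omega)]
  · rw [Nat.descFactorial_eq_zero_iff_lt.2 h, Nat.cast_zero]
    symm
    exact Finset.prod_eq_zero (Finset.mem_range.2 h) (by simp)

lemma factorial_mul_choose (N k : ℕ) :
    (Nat.factorial k : ℚ) * (N.choose k : ℚ) = (N.descFactorial k : ℚ) := by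
  have h : Nat.factorial k * (N.descFactorial k / Nat.factorial k) = N.descFactorial k :=
    Nat.mul_div_cancel' (Nat.factorial_dvd_descFactorial N k)
  rw [Nat.choose_eq_descFactorial_div_factorial]
  exact_mod_cast congrArg (fun t : ℕ => (t : ℚ)) h

lemma shift_up (x : ℚ) : ∀ k : ℕ, x * ∏ m ∈ range k, (x + 1 + m) = (∏ m ∈ range k, (x + m)) * (x + k)
  | 0 => by simp
  | (k + 1) => by
      rw [Finset.prod_range_succ, Finset.prod_range_succ]
      have ih := shift_up x k
      push_cast
      linear_combination (x + 1 + (k : ℚ)) * ih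

lemma shift_down (x : ℚ) : ∀ k : ℕ, x * ∏ m ∈ range k, (x - 1 - m) = (∏ m ∈ range k, (x - m)) * (x - k)
  | 0 => by simp
  | (k + 1) => by
      rw [Finset.prod_range_succ, Finset.prod_range_succ]
      have ih := shift_down x k
      push_cast
      linear_combination (x - 1 - (k : ℚ)) * ih

lemma refl_up (x : ℚ) (k : ℕ) : ∏ i ∈ range k, (x + k - i) = ∏ i ∈ range k, (x + 1 + i) := by
  have h := Finset.prod_range_reflect (fun j : ℕ => x + 1 + j) k
  rw [← h]
  refine Finset.prod_congr rfl fun i hi => ?_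
  rw [Finset.mem_range] at hi
  have hc : ((k - 1 - i : ℕ) : ℚ) = (k : ℚ) - 1 - i := by
    have h1 : k - 1 - i = k - (1 + i) := by omega
    rw [h1, Nat.cast_sub (by omega)]
    push_cast; ring
  simp only [hc]
  ring

lemma refl_down (x : ℚ) (k : ℕ) : ∏ i ∈ range k, (x + k - 1 - i) = ∏ i ∈ range k, (x + i) := by
  have h := Finset.prod_range_reflect (fun j : ℕ => x + j) k
  rw [← h]
  refine Finset.prod_congr rfl fun i hi => ?_
  rw [Finset.mem_range] at hi
  have hc : ((k - 1 - i : ℕ) : ℚ) = (k : ℚ) - 1 - i := by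
    have h1 : k - 1 - i = k - (1 + i) := by omega
    rw [h1, Nat.cast_sub (by omega)]
    push_cast; ring
  simp only [hc]
  ring

/-- The key arithmetic identity:
`(2/(2k)!) * ∏_{m<k} (x² - m²) = C(x+k, 2k) + C(x+k-1, 2k)`. -/
lemma key (k x : ℕ) (hk : 1 ≤ k) :
    (2 / (Nat.factorial (2 * k) : ℚ)) * ∏ m ∈ range k, ((x : ℚ) ^ 2 - (m : ℚ) ^ 2)
      = ((x + k).choose (2 * k) : ℚ) + ((x + k - 1).choose (2 * k) : ℚ) := by
  rcases lt_or_ge x k with hxk | hxk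
  · have h0 : ∏ m ∈ range k, ((x : ℚ) ^ 2 - (m : ℚ) ^ 2) = 0 :=
      Finset.prod_eq_zero (mem_range.2 hxk) (by ring)
    rw [h0, mul_zero, Nat.choose_eq_zero_of_lt (by omega), Nat.choose_eq_zero_of_lt (by omega)]
    simp
  · have hx1 : 1 ≤ x := le_trans hk hxk
    have hx0 : (x : ℚ) ≠ 0 := by positivity
    have hsplit1 : ((x + k).descFactorial (2 * k) : ℚ)
        = (∏ i ∈ range k, ((x : ℚ) + k - i)) * ∏ i ∈ range k, ((x : ℚ) - i) := by
      rw [cast_descFactorial, two_mul, Finset.prod_range_add]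
      congr 1
      · exact Finset.prod_congr rfl fun i _ => by push_cast; ring
      · exact Finset.prod_congr rfl fun i _ => by push_cast; ring
    have hcast : ((x + k - 1 : ℕ) : ℚ) = (x : ℚ) + k - 1 := by
      rw [Nat.cast_sub (by omega)]; push_cast; ring
    have hsplit2 : ((x + k - 1).descFactorial (2 * k) : ℚ)
        = (∏ i ∈ range k, ((x : ℚ) + k - 1 - i)) * ∏ i ∈ range k, ((x : ℚ) - 1 - i) := by
      rw [cast_descFactorial, two_mul, Finset.prod_range_add]
      congr 1
      · refine Finset.prod_congr rfl fun i _ => ?_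
        rw [hcast]
      · refine Finset.prod_congr rfl fun i _ => ?_
        rw [hcast]
        push_cast
        ring
    have e1 : (x : ℚ) * ((x + k).descFactorial (2 * k) : ℚ)
        = ((x : ℚ) + k) * (∏ i ∈ range k, ((x : ℚ) + i)) * ∏ i ∈ range k, ((x : ℚ) - i) := by
      rw [hsplit1, refl_up]
      calc (x : ℚ) * ((∏ i ∈ range k, ((x : ℚ) + 1 + i)) * ∏ i ∈ range k, ((x : ℚ) - i))
          = ((x : ℚ) * ∏ i ∈ range k, ((x : ℚ) + 1 + i)) * ∏ i ∈ range k, ((x : ℚ) - i) := by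
            ring
        _ = ((∏ i ∈ range k, ((x : ℚ) + i)) * ((x : ℚ) + k)) * ∏ i ∈ range k, ((x : ℚ) - i) := by
            rw [shift_up (x : ℚ) k]
        _ = _ := by ring
    have e2 : (x : ℚ) * ((x + k - 1).descFactorial (2 * k) : ℚ)
        = ((x : ℚ) - k) * (∏ i ∈ range k, ((x : ℚ) + i)) * ∏ i ∈ range k, ((x : ℚ) - i) := by
      rw [hsplit2, refl_down]
      calc (x : ℚ) * ((∏ i ∈ range k, ((x : ℚ) + i)) * ∏ i ∈ range k, ((x : ℚ) - 1 - i))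
          = (∏ i ∈ range k, ((x : ℚ) + i)) * ((x : ℚ) * ∏ i ∈ range k, ((x : ℚ) - 1 - i)) := by
            ring
        _ = (∏ i ∈ range k, ((x : ℚ) + i)) * ((∏ i ∈ range k, ((x : ℚ) - i)) * ((x : ℚ) - k)) := by
            rw [shift_down (x : ℚ) k]
        _ = _ := by ring
    have e5 : ((x + k).descFactorial (2 * k) : ℚ) + ((x + k - 1).descFactorial (2 * k) : ℚ)
        = 2 * (∏ i ∈ range k, ((x : ℚ) + i)) * ∏ i ∈ range k, ((x : ℚ) - i) := by
      apply mul_left_cancel₀ hx0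
      rw [mul_add, e1, e2]
      ring
    have hprod : ∏ m ∈ range k, ((x : ℚ) ^ 2 - (m : ℚ) ^ 2)
        = (∏ i ∈ range k, ((x : ℚ) + i)) * ∏ i ∈ range k, ((x : ℚ) - i) := by
      rw [← Finset.prod_mul_distrib]
      exact Finset.prod_congr rfl fun m _ => by ring
    have hfac : (Nat.factorial (2 * k) : ℚ) ≠ 0 := by
      exact_mod_cast Nat.factorial_ne_zero (2 * k)
    apply mul_left_cancel₀ hfac
    rw [mul_add, factorial_mul_choose, factorial_mul_choose, e5, hprod]
    field_simp

/-- The polynomial `∏_{m<k} (X - m²)`. -/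
noncomputable def Pk (k : ℕ) : ℚ[X] := ∏ m ∈ range k, (X - C ((m : ℚ) ^ 2))

lemma Pk_monic (k : ℕ) : (Pk k).Monic :=
  monic_prod_of_monic _ _ fun m _ => monic_X_sub_C _

lemma Pk_natDegree (k : ℕ) : (Pk k).natDegree = k := by
  rw [Pk, natDegree_prod _ _ fun m _ => X_sub_C_ne_zero _]
  simp only [natDegree_X_sub_C]
  simp

lemma Pk_eval (k : ℕ) (y : ℚ) : (Pk k).eval y = ∏ m ∈ range k, (y - (m : ℚ) ^ 2) := by
  simp [Pk, eval_prod]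

/-- Leading scalars. -/
noncomputable def cc (k : ℕ) : ℚ := if k = 0 then 1 else 2 / (Nat.factorial (2 * k) : ℚ)

lemma cc_pos (k : ℕ) : 0 < cc k := by
  unfold cc
  split
  · norm_num
  · positivity

/-- Integer entries. -/
def E (x k : ℕ) : ℕ := if k = 0 then 1 else (x + k).choose (2 * k) + (x + k - 1).choose (2 * k)

lemma entry (x k : ℕ) : cc k * (Pk k).eval ((x : ℚ) ^ 2) = (E x k : ℚ) := by
  unfold cc E
  rcases Nat.eq_zero_or_pos k with rfl | hk
  · simp [Pk]
  · rw [if_neg (by omega), if_neg (by omega), Pk_eval]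
    rw [key k x hk]
    push_cast
    ring

lemma E_diag (k : ℕ) : E k k = 1 := by
  unfold E
  rcases Nat.eq_zero_or_pos k with rfl | hk
  · simp
  · rw [if_neg (by omega)]
    have h1 : k + k = 2 * k := by ring
    rw [h1, Nat.choose_self, Nat.choose_eq_zero_of_lt (by omega)]

lemma Pk_eval_sq_zero {x k : ℕ} (h : x < k) : (Pk k).eval ((x : ℚ) ^ 2) = 0 := by
  rw [Pk_eval]
  exact Finset.prod_eq_zero (mem_range.2 h) (by ring)

end WeylDimAux


/-- Integrality and positivity of the Weyl dimension formula in type D: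
for integers `a₂ > a₃ > … > a_{n+1} ≥ 0` and `ρ_j = n + 1 - j`, the quotient
`∏_{2 ≤ p < q ≤ n+1} (a_p² - a_q²) / ∏_{2 ≤ p < q ≤ n+1} (ρ_p² - ρ_q²)`
is a positive integer. -/
theorem weyl_dim_pos_integral (n : ℕ) (hn : 1 ≤ n) (a : ℕ → ℤ)
    (hdec : ∀ p q, 2 ≤ p → p < q → q ≤ n + 1 → a q < a p)
    (hpos : 0 ≤ a (n + 1)) :
    ∃ m : ℤ, 0 < m ∧
      (∏ p ∈ Finset.Icc 2 (n + 1), ∏ q ∈ Finset.Icc (p + 1) (n + 1),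
          ((a p : ℚ) ^ 2 - (a q : ℚ) ^ 2)) /
        (∏ p ∈ Finset.Icc 2 (n + 1), ∏ q ∈ Finset.Icc (p + 1) (n + 1),
          (((n : ℚ) + 1 - (p : ℚ)) ^ 2 - ((n : ℚ) + 1 - (q : ℚ)) ^ 2))
      = (m : ℚ) := by
  classical
  open WeylDimAux Polynomial Matrix in
  -- nonnegativity of the `a`'s in range
  have ha : ∀ m, 2 ≤ m → m ≤ n + 1 → 0 ≤ a m := by
    intro m h2 hle
    rcases eq_or_lt_of_le hle with rfl | h
    · exact hpos
    · exact le_of_lt (lt_of_le_of_lt hpos (hdec m (n + 1) h2 h le_rfl))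
  -- reindexing lemma
  have step1 : ∀ F : ℕ → ℕ → ℚ,
      (∏ p ∈ Finset.Icc 2 (n + 1), ∏ q ∈ Finset.Icc (p + 1) (n + 1), F p q)
        = ∏ i : Fin n, ∏ j ∈ Finset.Ioi i, F (n + 1 - (j : ℕ)) (n + 1 - (i : ℕ)) := by
    intro F
    rw [Finset.prod_sigma', Finset.prod_sigma']
    refine Finset.prod_bij'
      (fun s hs => by
        refine ⟨⟨n + 1 - s.2, ?_⟩, ⟨n + 1 - s.1, ?_⟩⟩
        · simp only [Finset.mem_sigma, Finset.mem_Icc] at hs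
          omega
        · simp only [Finset.mem_sigma, Finset.mem_Icc] at hs
          omega)
      (fun t _ => ⟨n + 1 - (t.2 : ℕ), n + 1 - (t.1 : ℕ)⟩)
      ?_ ?_ ?_ ?_ ?_
    · intro s hs
      simp only [Finset.mem_sigma, Finset.mem_Icc] at hs
      simp only [Finset.mem_sigma, Finset.mem_univ, Finset.mem_Ioi, true_and]
      exact Fin.mk_lt_mk.2 (by omega)
    · intro t ht
      simp only [Finset.mem_sigma, Finset.mem_univ, Finset.mem_Ioi, true_and] at ht
      have h1 : (t.1 : ℕ) < (t.2 : ℕ) := ht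
      have h2 : (t.2 : ℕ) < n := t.2.isLt
      simp only [Finset.mem_sigma, Finset.mem_Icc]
      omega
    · intro s hs
      simp only [Finset.mem_sigma, Finset.mem_Icc] at hs
      ext
      · simp; omega
      · simp; omega
    · intro t ht
      simp only [Finset.mem_sigma, Finset.mem_univ, Finset.mem_Ioi, true_and] at ht
      have h1 : (t.1 : ℕ) < (t.2 : ℕ) := ht
      have h2 : (t.2 : ℕ) < n := t.2.isLt
      have h3 : (t.1 : ℕ) < n := t.1.isLt
      ext
      · simp [Fin.ext_iff]; omega
      · simp [Fin.ext_iff]; omega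
    · intro s hs
      simp only [Finset.mem_sigma, Finset.mem_Icc] at hs
      have h1 : n + 1 - (n + 1 - s.1) = s.1 := by omega
      have h2 : n + 1 - (n + 1 - s.2) = s.2 := by omega
      simp only []
      rw [h1, h2]
  -- the increasing sequence of nonnegative values
  set x : Fin n → ℕ := fun i => (a (n + 1 - (i : ℕ))).toNat with hx
  have hxcast : ∀ i : Fin n, ((x i : ℕ) : ℚ) = ((a (n + 1 - (i : ℕ)) : ℤ) : ℚ) := by
    intro i
    have hi : (i : ℕ) < n := i.isLt
    have h0 : 0 ≤ a (n + 1 - (i : ℕ)) := ha _ (by omega) (by omega)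
    rw [hx]
    exact_mod_cast congrArg (fun z : ℤ => (z : ℚ)) (Int.toNat_of_nonneg h0)
  have hxmono : ∀ i j : Fin n, i < j → x i < x j := by
    intro i j hij
    have hij' : (i : ℕ) < (j : ℕ) := hij
    have hj : (j : ℕ) < n := j.isLt
    have hlt : a (n + 1 - (i : ℕ)) < a (n + 1 - (j : ℕ)) :=
      hdec (n + 1 - (j : ℕ)) (n + 1 - (i : ℕ)) (by omega) (by omega) (by omega)
    have h0 : 0 ≤ a (n + 1 - (i : ℕ)) := ha _ (by omega) (by omega)
    simp only [hx]
    omega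
  set u : Fin n → ℚ := fun i => ((x i : ℕ) : ℚ) ^ 2 with hu
  set r : Fin n → ℚ := fun i => (((i : ℕ) : ℚ)) ^ 2 with hr
  -- numerator and denominator as Vandermonde determinants
  have hnum : (∏ p ∈ Finset.Icc 2 (n + 1), ∏ q ∈ Finset.Icc (p + 1) (n + 1),
      ((a p : ℚ) ^ 2 - (a q : ℚ) ^ 2)) = (Matrix.vandermonde u).det := by
    rw [step1 (fun p q => (a p : ℚ) ^ 2 - (a q : ℚ) ^ 2), Matrix.det_vandermonde]
    refine Finset.prod_congr rfl fun i _ => Finset.prod_congr rfl fun j _ => ?_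
    rw [hu]
    simp only []
    rw [hxcast i, hxcast j]
  have hden : (∏ p ∈ Finset.Icc 2 (n + 1), ∏ q ∈ Finset.Icc (p + 1) (n + 1),
      (((n : ℚ) + 1 - (p : ℚ)) ^ 2 - ((n : ℚ) + 1 - (q : ℚ)) ^ 2)) = (Matrix.vandermonde r).det := by
    rw [step1 (fun p q => ((n : ℚ) + 1 - (p : ℚ)) ^ 2 - ((n : ℚ) + 1 - (q : ℚ)) ^ 2),
      Matrix.det_vandermonde]
    refine Finset.prod_congr rfl fun i _ => Finset.prod_congr rfl fun j _ => ?_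
    have hi : (i : ℕ) < n := i.isLt
    have hj : (j : ℕ) < n := j.isLt
    have c1 : ((n + 1 - (j : ℕ) : ℕ) : ℚ) = (n : ℚ) + 1 - (j : ℕ) := by
      rw [Nat.cast_sub (by omega)]; push_cast; ring
    have c2 : ((n + 1 - (i : ℕ) : ℕ) : ℚ) = (n : ℚ) + 1 - (i : ℕ) := by
      rw [Nat.cast_sub (by omega)]; push_cast; ring
    rw [c1, c2, hr]
    simp only []
    ring
  -- the polynomial determinant identity, for any v
  have hpoly : ∀ v : Fin n → ℚ,
      Matrix.det (Matrix.of fun i k : Fin n => cc (k : ℕ) * (Pk (k : ℕ)).eval (v i))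
        = (∏ k : Fin n, cc (k : ℕ)) * (Matrix.vandermonde v).det := by
    intro v
    rw [Matrix.det_eval_matrixOfPolynomials_eq_det_vandermonde v (fun k => Pk (k : ℕ))
      (fun k => Pk_natDegree (k : ℕ)) (fun k => Pk_monic (k : ℕ))]
    exact Matrix.det_mul_row (fun k : Fin n => cc (k : ℕ)) _
  set c : ℚ := ∏ k : Fin n, cc (k : ℕ) with hc
  have hcpos : 0 < c := Finset.prod_pos fun k _ => cc_pos _
  have hcne : c ≠ 0 := ne_of_gt hcpos
  -- numerator-side integer matrix
  set M : Matrix (Fin n) (Fin n) ℤ := Matrix.of fun i k => (E (x i) (k : ℕ) : ℤ) with hM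
  have hMQ : (Matrix.of fun i k : Fin n => cc (k : ℕ) * (Pk (k : ℕ)).eval (u i))
      = M.map (Int.castRingHom ℚ : ℤ →+* ℚ) := by
    ext i k
    simp only [Matrix.of_apply, Matrix.map_apply, hM, hu]
    rw [entry (x i) (k : ℕ)]
    simp only [Int.coe_castRingHom]
    push_cast
    ring
  have hudet : c * (Matrix.vandermonde u).det = ((M.det : ℤ) : ℚ) := by
    rw [← hpoly u, hMQ, ← RingHom.mapMatrix_apply, ← RingHom.map_det]
    simp
  -- denominator-side matrix is unitriangular
  have hrdet : c * (Matrix.vandermonde r).det = 1 := by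
    rw [← hpoly r]
    have htri : (Matrix.of fun i k : Fin n => cc (k : ℕ) * (Pk (k : ℕ)).eval (r i)).BlockTriangular
        OrderDual.toDual := by
      intro i k h
      have hik : i < k := h
      have hik' : (i : ℕ) < (k : ℕ) := hik
      simp only [Matrix.of_apply, hr]
      rw [Pk_eval_sq_zero hik', mul_zero]
    rw [Matrix.det_of_lowerTriangular _ htri]
    have hdiag : ∀ i : Fin n, (Matrix.of fun i k : Fin n =>
        cc (k : ℕ) * (Pk (k : ℕ)).eval (r i)) i i = 1 := by
      intro i
      simp only [Matrix.of_apply, hr]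
      rw [entry (i : ℕ) (i : ℕ), E_diag, Nat.cast_one]
    rw [Finset.prod_congr rfl fun i _ => hdiag i, Finset.prod_const_one]
  have hrne : (Matrix.vandermonde r).det ≠ 0 := by
    intro h
    rw [h, mul_zero] at hrdet
    norm_num at hrdet
  -- positivity of the two Vandermonde determinants
  have hupos : 0 < (Matrix.vandermonde u).det := by
    rw [Matrix.det_vandermonde]
    refine Finset.prod_pos fun i _ => Finset.prod_pos fun j hj => ?_
    have hij : i < j := Finset.mem_Ioi.1 hj
    have hlt : x i < x j := hxmono i j hij
    have : ((x i : ℕ) : ℚ) < ((x j : ℕ) : ℚ) := by exact_mod_cast hlt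
    have := pow_lt_pow_left₀ this (by positivity) (two_ne_zero)
    simp only [hu]
    linarith
  have hrpos : 0 < (Matrix.vandermonde r).det := by
    rw [Matrix.det_vandermonde]
    refine Finset.prod_pos fun i _ => Finset.prod_pos fun j hj => ?_
    have hij : i < j := Finset.mem_Ioi.1 hj
    have hij' : (i : ℕ) < (j : ℕ) := hij
    have : (((i : ℕ)) : ℚ) < (((j : ℕ)) : ℚ) := by exact_mod_cast hij'
    have := pow_lt_pow_left₀ this (by positivity) (two_ne_zero)
    simp only [hr]
    linarith
  -- conclude
  refine ⟨M.det, ?_, ?_⟩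
  · have hq : (Matrix.vandermonde u).det / (Matrix.vandermonde r).det = ((M.det : ℤ) : ℚ) := by
      rw [div_eq_iff hrne]
      apply mul_left_cancel₀ hcne
      rw [show c * (((M.det : ℤ) : ℚ) * (Matrix.vandermonde r).det)
          = ((M.det : ℤ) : ℚ) * (c * (Matrix.vandermonde r).det) by ring, hrdet, mul_one, hudet]
    have : (0 : ℚ) < ((M.det : ℤ) : ℚ) := by
      rw [← hq]
      exact div_pos hupos hrpos
    exact_mod_cast this
  · rw [hnum, hden, div_eq_iff hrne]
    apply mul_left_cancel₀ hcne
    rw [show c * (((M.det : ℤ) : ℚ) * (Matrix.vandermonde r).det)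
        = ((M.det : ℤ) : ℚ) * (c * (Matrix.vandermonde r).det) by ring, hrdet, mul_one, hudet]
end

section
/- Let n ≥ 1 be a natural number, let ι be a countable index set, let ℓ : ι → ℝ be a function, and suppose there exist constants ℓ₀ > 0 and C > 0 such that ℓ_i ≥ ℓ₀ for all i ∈ ι and such that for every R ≥ 0 the set {i ∈ ι : ℓ_i ≤ R} is finite with at most C·e^{2nR} elements. Then for every real number x > 2n, the family ( e^{−(x+n) ℓ_i} · (1 − e^{−ℓ_i})^{−n} )_{i ∈ ι} is summable. -/
/-- Convergence of the Selberg zeta series: if the lengths `ℓ i` are bounded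
below by `ℓ₀ > 0` and satisfy the counting bound
`#{i : ℓ i ≤ R} ≤ C e^{2nR}`, then for every `x > 2n` the family
`e^{-(x+n)ℓ i} (1 - e^{-ℓ i})^{-n}` is summable. -/
theorem selberg_zeta_summable (n : ℕ) (hn : 1 ≤ n) {ι : Type*} [Countable ι]
    (ℓ : ι → ℝ) (ℓ₀ C : ℝ) (hℓ₀ : 0 < ℓ₀) (hC : 0 < C)
    (hlow : ∀ i, ℓ₀ ≤ ℓ i)
    (hcount : ∀ R : ℝ, 0 ≤ R → ∃ h : {i | ℓ i ≤ R}.Finite,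
      (h.toFinset.card : ℝ) ≤ C * Real.exp (2 * n * R)) :
    ∀ x : ℝ, 2 * n < x →
      Summable (fun i =>
        Real.exp (-(x + n) * ℓ i) * ((1 - Real.exp (-ℓ i))⁻¹) ^ n) := by
  classical
  intro x hx
  have hℓpos : ∀ i, 0 < ℓ i := fun i => lt_of_lt_of_le hℓ₀ (hlow i)
  have h1 : (0:ℝ) < 1 - Real.exp (-ℓ₀) := by
    have : Real.exp (-ℓ₀) < 1 := Real.exp_lt_one_iff.mpr (neg_lt_zero.mpr hℓ₀)
    linarith
  set K : ℝ := ((1 - Real.exp (-ℓ₀))⁻¹) ^ n with hK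
  have hxpos : (0:ℝ) < x := lt_of_le_of_lt (by positivity) hx
  -- Summability of the majorant `exp (-x * ℓ i)` via the counting bound.
  have hg : Summable (fun i => Real.exp (-x * ℓ i)) := by
    set r : ℝ := Real.exp (2 * n - x) with hr
    have hr0 : 0 ≤ r := Real.exp_nonneg _
    have hr1 : r < 1 := Real.exp_lt_one_iff.mpr (by linarith)
    have hgeo : Summable (fun k : ℕ => C * Real.exp (2 * n) * r ^ k) :=
      (summable_geometric_of_lt_one hr0 hr1).mul_left _
    apply summable_of_sum_le (c := ∑' k : ℕ, C * Real.exp (2 * n) * r ^ k)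
    · intro i
      positivity
    · intro u
      set T : ι → ℕ := fun i => ⌊ℓ i⌋₊ with hT
      have hmap : ∀ i ∈ u, T i ∈ u.image T := fun i hi => Finset.mem_image_of_mem T hi
      rw [← Finset.sum_fiberwise_of_maps_to hmap (fun i => Real.exp (-x * ℓ i))]
      have hinner : ∀ k ∈ u.image T,
          ∑ i ∈ u.filter (fun i => T i = k), Real.exp (-x * ℓ i)
            ≤ C * Real.exp (2 * n) * r ^ k := by
        intro k _
        obtain ⟨hfin, hcard⟩ := hcount ((k : ℝ) + 1) (by positivity)
        have hsub : u.filter (fun i => T i = k) ⊆ hfin.toFinset := by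
          intro i hi
          rw [Finset.mem_filter] at hi
          rw [Set.Finite.mem_toFinset]
          have h2 : ⌊ℓ i⌋₊ = k := hi.2
          have h3 := Nat.lt_floor_add_one (ℓ i)
          rw [h2] at h3
          exact le_of_lt h3
        have hcard' : ((u.filter (fun i => T i = k)).card : ℝ) ≤ C * Real.exp (2 * n * (k + 1)) :=
          le_trans (Nat.cast_le.mpr (Finset.card_le_card hsub)) hcard
        have hterm : ∀ i ∈ u.filter (fun i => T i = k),
            Real.exp (-x * ℓ i) ≤ Real.exp (-x * k) := by
          intro i hi
          rw [Finset.mem_filter] at hi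
          apply Real.exp_le_exp.mpr
          have hk : (k : ℝ) ≤ ℓ i := by
            rw [← hi.2]
            exact Nat.floor_le (le_of_lt (hℓpos i))
          nlinarith
        calc ∑ i ∈ u.filter (fun i => T i = k), Real.exp (-x * ℓ i)
            ≤ ∑ _i ∈ u.filter (fun i => T i = k), Real.exp (-x * k) :=
              Finset.sum_le_sum hterm
          _ = ((u.filter (fun i => T i = k)).card : ℝ) * Real.exp (-x * k) := by
              rw [Finset.sum_const, nsmul_eq_mul]
          _ ≤ C * Real.exp (2 * n * (k + 1)) * Real.exp (-x * k) := by
              apply mul_le_mul_of_nonneg_right hcard' (Real.exp_nonneg _)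
          _ = C * Real.exp (2 * n) * r ^ k := by
              have harg : (2:ℝ) * n * (k + 1) + -x * k = 2 * n + k * (2 * n - x) := by ring
              rw [hr, ← Real.exp_nat_mul, mul_assoc, ← Real.exp_add, harg, Real.exp_add,
                ← mul_assoc]
      calc ∑ k ∈ u.image T, ∑ i ∈ u.filter (fun i => T i = k), Real.exp (-x * ℓ i)
          ≤ ∑ k ∈ u.image T, C * Real.exp (2 * n) * r ^ k := Finset.sum_le_sum hinner
        _ ≤ ∑' k : ℕ, C * Real.exp (2 * n) * r ^ k :=
            Summable.sum_le_tsum _ (fun k _ => by positivity) hgeo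
  -- Compare the original series with `K * exp (-x * ℓ i)`.
  refine Summable.of_nonneg_of_le ?_ ?_ (hg.mul_left K)
  · intro i
    have h2 : (0:ℝ) < 1 - Real.exp (-ℓ i) := by
      have : Real.exp (-ℓ i) < 1 := Real.exp_lt_one_iff.mpr (neg_lt_zero.mpr (hℓpos i))
      linarith
    positivity
  · intro i
    have hi1 : (0:ℝ) < 1 - Real.exp (-ℓ i) := by
      have : Real.exp (-ℓ i) < 1 := Real.exp_lt_one_iff.mpr (neg_lt_zero.mpr (hℓpos i))
      linarith
    have hle1 : Real.exp (-(x + n) * ℓ i) ≤ Real.exp (-x * ℓ i) := by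
      apply Real.exp_le_exp.mpr
      have := hℓpos i
      nlinarith [Nat.cast_nonneg (α := ℝ) n]
    have hle2 : ((1 - Real.exp (-ℓ i))⁻¹) ^ n ≤ K := by
      rw [hK]
      apply pow_le_pow_left₀ (by positivity)
      apply inv_anti₀ h1
      have : Real.exp (-ℓ i) ≤ Real.exp (-ℓ₀) :=
        Real.exp_le_exp.mpr (neg_le_neg (hlow i))
      linarith
    calc Real.exp (-(x + n) * ℓ i) * ((1 - Real.exp (-ℓ i))⁻¹) ^ n
        ≤ Real.exp (-x * ℓ i) * K := by
          apply mul_le_mul hle1 hle2 (by positivity) (Real.exp_nonneg _)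
      _ = K * Real.exp (-x * ℓ i) := mul_comm _ _
end

section
/- Let ℓ > 0 be a real number and let s be a complex number with Re(s) > 0 and Re(s²) > 0. Then the function t ↦ e^{−t s²} · t^{−1/2} · e^{−ℓ²/(4t)} is integrable on (0,∞) and ∫₀^∞ e^{−t s²} t^{−1/2} e^{−ℓ²/(4t)} dt = (√π / s) · e^{−ℓ s}. -/
/-!
Substituting `t = u²` and completing the square,
`∫₀^∞ e^{-t s²} t^{-1/2} e^{-ℓ²/(4t)} dt = 2 e^{-ℓ s} ∫₀^∞ e^{-(s u - ℓ/(2u))²} du`.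
For real `s = c > 0` the substitution `w = c u - ℓ/(2u)` (Cauchy–Schlömilch) maps `(0, ∞)`
onto `ℝ` with Jacobian `du/dw = (1 + w/√(w² + 2cℓ)) / (2c)`, whose second summand is odd,
so the last integral is `√π / (2c)`. For complex `s`, both sides are holomorphic functions
of `z = s²` on the right half-plane: the left side is the Laplace transform of
`t^{-1/2} e^{-ℓ²/(4t)}`, the right side is `√π z^{-1/2} e^{-ℓ √z}`. They agree on the
positive reals, hence everywhere, and `√(s²) = s` because `Re s > 0`.
-/

open MeasureTheory Set Filter Topology Real

theorem integral_eq_zero_of_odd {E : Type*} [NormedAddCommGroup E] [NormedSpace ℝ E]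
    {f : ℝ → E} (hf : ∀ x, f (-x) = -f x) : ∫ x, f x = 0 := by
  have h := integral_neg_eq_self f volume
  simp only [hf, integral_neg] at h
  have : (2 : ℝ) • ∫ x, f x = 0 := by rw [two_smul]; nth_rw 1 [← h]; exact neg_add_cancel _
  exact (smul_eq_zero.1 this).resolve_left two_ne_zero

theorem integral_Ioi_comp_mul_sub_div {E : Type*} [NormedAddCommGroup E] [NormedSpace ℝ E]
    {a b : ℝ} (ha : 0 < a) (hb : 0 < b) (f : ℝ → E) :
    ∫ u in Ioi 0, f (a * u - b / u) =
      ∫ w, ((1 + w / √(w ^ 2 + 4 * a * b)) / (2 * a)) • f w := by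
  set r : ℝ → ℝ := fun w => √(w ^ 2 + 4 * a * b)
  have habs (w : ℝ) : |w| < r w :=
    (Real.lt_sqrt (abs_nonneg w)).2 (by rw [sq_abs]; nlinarith [mul_pos ha hb])
  have hr_pos (w : ℝ) : 0 < r w := (abs_nonneg w).trans_lt (habs w)
  have hw_gt (w : ℝ) : -r w < w := by linarith [neg_abs_le w, habs w]
  -- `φ` inverts `u ↦ a u - b / u`: it picks the positive root of `a u² - w u - b = 0`
  set φ : ℝ → ℝ := fun w => (w + r w) / (2 * a)
  set φ' : ℝ → ℝ := fun w => (1 + w / r w) / (2 * a)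
  have hφ_pos (w : ℝ) : 0 < φ w := div_pos (by linarith [hw_gt w]) (by positivity)
  have hφ'_pos (w : ℝ) : 0 < φ' w := by
    have : -1 < w / r w := by rw [lt_div_iff₀ (hr_pos w)]; linarith [hw_gt w]
    exact div_pos (by linarith) (by positivity)
  have hφ_deriv (w : ℝ) : HasDerivAt φ (φ' w) w := by
    have hr : HasDerivAt r (2 * w / (2 * r w)) w := by
      simpa using ((hasDerivAt_pow 2 w).add_const (4 * a * b)).sqrt (by positivity)
    refine (((hasDerivAt_id' w).add hr).div_const (2 * a)).congr_deriv ?_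
    rw [mul_div_mul_left _ _ two_ne_zero]
  have hφ_inv (w : ℝ) : a * φ w - b / φ w = w := by
    have hφ_ne : φ w ≠ 0 := (hφ_pos w).ne'
    have hroot : a * φ w ^ 2 - w * φ w = b := by
      simp only [φ]; field_simp; nlinarith [Real.sq_sqrt (by positivity : 0 ≤ w ^ 2 + 4 * a * b)]
    field_simp; linarith
  have hφ_image : φ '' univ = Ioi 0 := by
    refine Subset.antisymm (image_subset_iff.2 fun w _ => hφ_pos w) fun u (hu : 0 < u) => ?_
    refine ⟨a * u - b / u, mem_univ _, ?_⟩
    have hr : r (a * u - b / u) = a * u + b / u := by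
      rw [Real.sqrt_eq_iff_eq_sq (by positivity) (by positivity)]; field_simp; ring
    simp only [φ, hr]; field_simp; ring
  have hφ_inj : InjOn φ univ :=
    (Function.LeftInverse.injective (g := fun u => a * u - b / u) hφ_inv).injOn
  rw [← hφ_image, integral_image_eq_integral_abs_deriv_smul MeasurableSet.univ
    (fun w _ => (hφ_deriv w).hasDerivWithinAt) hφ_inj, Measure.restrict_univ]
  simp only [abs_of_pos (hφ'_pos _), hφ_inv, φ']
  rfl

theorem integral_exp_neg_sq_sub_div {a b : ℝ} (ha : 0 < a) (hb : 0 < b) :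
    ∫ u in Ioi 0, Real.exp (-(a * u - b / u) ^ 2) = √π / (2 * a) := by
  set r : ℝ → ℝ := fun w => √(w ^ 2 + 4 * a * b)
  have hgauss : Integrable fun w : ℝ => Real.exp (-w ^ 2) := by
    simpa using integrable_exp_neg_mul_sq one_pos
  have hgauss_eq : ∫ w, Real.exp (-w ^ 2) = √π := by simpa using integral_gaussian 1
  have hodd : Integrable fun w => w / r w * Real.exp (-w ^ 2) := by
    refine hgauss.mono' (by fun_prop) (.of_forall fun w => ?_)
    rw [norm_mul, Real.norm_of_nonneg (Real.exp_pos _).le]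
    refine mul_le_of_le_one_left (Real.exp_pos _).le ?_
    rw [norm_div, Real.norm_eq_abs, norm_of_nonneg (Real.sqrt_nonneg _)]
    exact div_le_one_of_le₀ (Real.abs_le_sqrt (by nlinarith [mul_pos ha hb])) (Real.sqrt_nonneg _)
  calc ∫ u in Ioi 0, Real.exp (-(a * u - b / u) ^ 2)
      = ∫ w, ((2 * a)⁻¹ * Real.exp (-w ^ 2) +
          (2 * a)⁻¹ * (w / r w * Real.exp (-w ^ 2))) := by
        rw [integral_Ioi_comp_mul_sub_div ha hb fun w => Real.exp (-w ^ 2)]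
        congr 1 with w
        rw [smul_eq_mul]
        ring
    _ = (2 * a)⁻¹ * √π + (2 * a)⁻¹ * 0 := by
        rw [integral_add (hgauss.const_mul _) (hodd.const_mul _), integral_const_mul,
          integral_const_mul, integral_eq_zero_of_odd (f := fun w => w / r w * Real.exp (-w ^ 2))
          fun w => by simp only [r, even_two.neg_pow, neg_div, neg_mul], hgauss_eq]
    _ = √π / (2 * a) := by ring

noncomputable def laplaceTransform (h : ℝ → ℂ) (z : ℂ) : ℂ :=
  ∫ t in Ioi (0 : ℝ), Complex.exp (-t * z) * h t

section LaplaceTransform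

variable {h : ℝ → ℂ}

theorem norm_cexp_neg_ofReal_mul (t : ℝ) (z : ℂ) :
    ‖Complex.exp (-t * z)‖ = Real.exp (-t * z.re) := by
  simp [Complex.norm_exp]

theorem integrableOn_laplaceTransform_integrand
    (hm : AEStronglyMeasurable h (volume.restrict (Ioi 0)))
    (hint : ∀ δ > 0, IntegrableOn (fun t => Real.exp (-δ * t) * ‖h t‖) (Ioi 0))
    {z : ℂ} (hz : 0 < z.re) :
    IntegrableOn (fun t : ℝ => Complex.exp (-t * z) * h t) (Ioi 0) := by
  refine (hint z.re hz).mono' ((by fun_prop : Continuous fun t : ℝ => Complex.exp (-t * z))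
    |>.aestronglyMeasurable.mul hm) (.of_forall fun t => ?_)
  rw [norm_mul, norm_cexp_neg_ofReal_mul, neg_mul, neg_mul, mul_comm t]

theorem hasDerivAt_laplaceTransform
    (hm : AEStronglyMeasurable h (volume.restrict (Ioi 0)))
    (hint : ∀ δ > 0, IntegrableOn (fun t => Real.exp (-δ * t) * ‖h t‖) (Ioi 0))
    {z₀ : ℂ} (hz₀ : 0 < z₀.re) :
    HasDerivAt (laplaceTransform h) (laplaceTransform (fun t => -t * h t) z₀) z₀ := by
  set δ := z₀.re / 4 with hδ_def
  have hδ : 0 < δ := by positivity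
  have hre (z : ℂ) (hz : z ∈ Metric.ball z₀ (2 * δ)) : 2 * δ < z.re := by
    have := (Complex.abs_re_le_norm (z - z₀)).trans_lt (mem_ball_iff_norm.1 hz)
    rw [Complex.sub_re, abs_lt] at this
    linarith
  -- the factor `t` brought down by `d/dz` is paid for with half of the decay rate
  have hdecay (t : ℝ) : t * Real.exp (-(2 * δ) * t) ≤ δ⁻¹ * Real.exp (-δ * t) := by
    have hle : δ * t * Real.exp (-(δ * t)) ≤ 1 :=
      (mul_exp_neg_le_exp_neg_one _).trans (Real.exp_le_one_iff.2 (by norm_num))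
    calc t * Real.exp (-(2 * δ) * t)
        = δ⁻¹ * (δ * t * Real.exp (-(δ * t))) * Real.exp (-δ * t) := by
          rw [show -(2 * δ) * t = -(δ * t) + -δ * t by ring, Real.exp_add]; field_simp
      _ ≤ δ⁻¹ * Real.exp (-δ * t) := by
          grw [hle, mul_one]
  refine (hasDerivAt_integral_of_dominated_loc_of_deriv_le (μ := volume.restrict (Ioi 0))
    (F := fun z (t : ℝ) => Complex.exp (-t * z) * h t)
    (F' := fun z (t : ℝ) => Complex.exp (-t * z) * (-t * h t))
    (Metric.ball_mem_nhds z₀ (ε := 2 * δ) (by positivity))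
    (.of_forall fun z => ?_) (integrableOn_laplaceTransform_integrand hm hint hz₀) ?_ ?_
    ((hint δ hδ).const_mul δ⁻¹) (.of_forall fun t z _ => ?_)).2
  · exact (by fun_prop : Continuous fun t : ℝ => Complex.exp (-t * z))
      |>.aestronglyMeasurable.mul hm
  · exact (by fun_prop : Continuous fun t : ℝ => Complex.exp (-t * z₀))
      |>.aestronglyMeasurable.mul
      ((by fun_prop : Continuous fun t : ℝ => -(t : ℂ)).aestronglyMeasurable.mul hm)
  · filter_upwards [ae_restrict_mem measurableSet_Ioi] with t (ht : 0 < t) z hz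
    rw [norm_mul, norm_mul, norm_cexp_neg_ofReal_mul, norm_neg, Complex.norm_real,
      Real.norm_of_nonneg ht.le, ← mul_assoc, ← mul_assoc, mul_comm _ t]
    have hexp : Real.exp (-t * z.re) ≤ Real.exp (-(2 * δ) * t) :=
      Real.exp_le_exp.2 (by nlinarith [hre z hz])
    grw [hexp, hdecay, mul_assoc]
  · simpa [mul_assoc] using (((hasDerivAt_id z).const_mul (-(t : ℂ))).cexp).mul_const (h t)

theorem differentiableOn_laplaceTransform
    (hm : AEStronglyMeasurable h (volume.restrict (Ioi 0)))
    (hint : ∀ δ > 0, IntegrableOn (fun t => Real.exp (-δ * t) * ‖h t‖) (Ioi 0)) :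
    DifferentiableOn ℂ (laplaceTransform h) {z | 0 < z.re} := fun _ hz =>
  (hasDerivAt_laplaceTransform hm hint hz).differentiableAt.differentiableWithinAt

end LaplaceTransform

/-- `√(4π)` times the heat kernel of `ℝ` at time `t` and distance `ℓ`. -/
noncomputable def rescaledHeatKernel (ℓ t : ℝ) : ℝ :=
  (√t)⁻¹ * Real.exp (-ℓ ^ 2 / (4 * t))

@[fun_prop]
theorem measurable_rescaledHeatKernel (ℓ : ℝ) : Measurable (rescaledHeatKernel ℓ) := by
  unfold rescaledHeatKernel
  fun_prop

theorem integrableOn_exp_neg_mul_mul_inv_sqrt {δ : ℝ} (hδ : 0 < δ) :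
    IntegrableOn (fun t => Real.exp (-δ * t) * (√t)⁻¹) (Ioi 0) := by
  refine (integrableOn_rpow_mul_exp_neg_mul_rpow (s := -(1 / 2)) (p := 1) (by norm_num) one_pos
    hδ).congr_fun (fun t (ht : 0 < t) => ?_) measurableSet_Ioi
  beta_reduce
  rw [Real.rpow_one, Real.rpow_neg ht.le, ← Real.sqrt_eq_rpow, mul_comm]

theorem integrableOn_exp_neg_mul_mul_norm_rescaledHeatKernel (ℓ : ℝ) {δ : ℝ} (hδ : 0 < δ) :
    IntegrableOn (fun t => Real.exp (-δ * t) * ‖(rescaledHeatKernel ℓ t : ℂ)‖) (Ioi 0) := by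
  refine (integrableOn_exp_neg_mul_mul_inv_sqrt hδ).mono'
    ((by fun_prop : Measurable fun t => Real.exp (-δ * t) * ‖(rescaledHeatKernel ℓ t : ℂ)‖)
      |>.aestronglyMeasurable) ?_
  filter_upwards [ae_restrict_mem measurableSet_Ioi] with t (ht : 0 < t)
  have hexp : Real.exp (-ℓ ^ 2 / (4 * t)) ≤ 1 :=
    Real.exp_le_one_iff.2 (by rw [neg_div]; exact neg_nonpos.2 (by positivity))
  rw [norm_mul, norm_norm, Complex.norm_real, Real.norm_of_nonneg (Real.exp_pos _).le,
    rescaledHeatKernel, Real.norm_of_nonneg (by positivity)]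
  grw [hexp, mul_one]

theorem integral_exp_neg_mul_sq_mul_rescaledHeatKernel {ℓ c : ℝ} (hℓ : 0 < ℓ) (hc : 0 < c) :
    ∫ t in Ioi 0, Real.exp (-t * c ^ 2) * rescaledHeatKernel ℓ t =
      √π / c * Real.exp (-ℓ * c) := by
  rw [← integral_comp_rpow_Ioi_of_pos two_pos]
  calc _ = ∫ u in Ioi 0, 2 * Real.exp (-ℓ * c) * Real.exp (-(c * u - ℓ / 2 / u) ^ 2) := by
        refine setIntegral_congr_fun measurableSet_Ioi fun u (hu : 0 < u) => ?_
        rw [Real.rpow_two, show (2 : ℝ) - 1 = 1 by norm_num, Real.rpow_one, smul_eq_mul,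
          rescaledHeatKernel, Real.sqrt_sq hu.le, mul_assoc 2 (Real.exp _), ← Real.exp_add]
        have hsq : -ℓ * c + -(c * u - ℓ / 2 / u) ^ 2 =
            -u ^ 2 * c ^ 2 + -ℓ ^ 2 / (4 * u ^ 2) := by
          field_simp; ring
        rw [hsq, Real.exp_add]
        field_simp
    _ = √π / c * Real.exp (-ℓ * c) := by
        rw [integral_const_mul, integral_exp_neg_sq_sub_div hc (by positivity)]
        field_simp

theorem laplaceTransform_rescaledHeatKernel_ofReal_sq {ℓ c : ℝ} (hℓ : 0 < ℓ) (hc : 0 < c) :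
    laplaceTransform (fun t => rescaledHeatKernel ℓ t) ((c : ℂ) ^ 2) =
      √π / c * Complex.exp (-ℓ * c) := by
  have hreal (t : ℝ) : Complex.exp (-t * (c : ℂ) ^ 2) * (rescaledHeatKernel ℓ t : ℂ) =
      ((Real.exp (-t * c ^ 2) * rescaledHeatKernel ℓ t : ℝ) : ℂ) := by
    push_cast; rfl
  simp_rw [laplaceTransform, hreal]
  rw [integral_complex_ofReal, integral_exp_neg_mul_sq_mul_rescaledHeatKernel hℓ hc]
  push_cast
  rfl

theorem laplaceTransform_rescaledHeatKernel {ℓ : ℝ} (hℓ : 0 < ℓ) {z : ℂ} (hz : 0 < z.re) :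
    laplaceTransform (fun t => rescaledHeatKernel ℓ t) z =
      √π / z ^ (2⁻¹ : ℂ) * Complex.exp (-ℓ * z ^ (2⁻¹ : ℂ)) := by
  set G : ℂ → ℂ := fun z => √π / z ^ (2⁻¹ : ℂ) * Complex.exp (-ℓ * z ^ (2⁻¹ : ℂ))
  have hL : AnalyticOnNhd ℂ (laplaceTransform fun t => rescaledHeatKernel ℓ t) {z | 0 < z.re} :=
    (differentiableOn_laplaceTransform
      (measurable_rescaledHeatKernel ℓ).complex_ofReal.aestronglyMeasurable
      fun _ => integrableOn_exp_neg_mul_mul_norm_rescaledHeatKernel ℓ).analyticOnNhd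
      (Complex.isOpen_re_gt 0)
  have hG : AnalyticOnNhd ℂ G {z | 0 < z.re} := by
    refine DifferentiableOn.analyticOnNhd (fun z (hz : 0 < z.re) => ?_) (Complex.isOpen_re_gt 0)
    have hsqrt : DifferentiableAt ℂ (· ^ (2⁻¹ : ℂ)) z :=
      differentiableAt_id.cpow_const (Or.inl hz)
    have hne : z ^ (2⁻¹ : ℂ) ≠ 0 :=
      Complex.cpow_ne_zero_iff.2 (Or.inl fun h => by simp [h] at hz)
    exact (((differentiableAt_const _).div hsqrt hne).mul
      (hsqrt.const_mul _).cexp).differentiableWithinAt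
  have hreal :
      ∀ᶠ x : ℝ in 𝓝[≠] 1, laplaceTransform (fun t => rescaledHeatKernel ℓ t) x = G x := by
    filter_upwards [nhdsWithin_le_nhds (lt_mem_nhds one_pos)] with x hx
    obtain ⟨c, hc, rfl⟩ : ∃ c > 0, c ^ 2 = x := ⟨√x, Real.sqrt_pos.2 hx, Real.sq_sqrt hx.le⟩
    rw [Complex.ofReal_pow, laplaceTransform_rescaledHeatKernel_ofReal_sq hℓ hc]
    simp only [G, Complex.sq_cpow_two_inv (x := c) (by simpa using hc)]
  have hofReal : Tendsto ((↑) : ℝ → ℂ) (𝓝[≠] 1) (𝓝[≠] 1) := by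
    simpa using Complex.continuous_ofReal.continuousWithinAt.tendsto_nhdsWithin
      (x := 1) (t := {1}ᶜ) fun x hx => by simpa using hx
  exact hL.eqOn_of_preconnected_of_frequently_eq hG (convex_halfSpace_re_gt 0).isPreconnected
    (by simp : (1 : ℂ) ∈ {z : ℂ | 0 < z.re}) (hofReal.frequently hreal.frequently) hz

/-- Subordination identity: for `ℓ > 0` and `s ∈ ℂ` with `Re s > 0` and
`Re(s²) > 0`, the function `t ↦ e^{-t s²} t^{-1/2} e^{-ℓ²/(4t)}` is
integrable on `(0, ∞)` and
`∫₀^∞ e^{-t s²} t^{-1/2} e^{-ℓ²/(4t)} dt = (√π / s) e^{-ℓ s}`. -/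
theorem subordination_identity (ℓ : ℝ) (hℓ : 0 < ℓ) (s : ℂ)
    (hs : 0 < s.re) (hs2 : 0 < (s ^ 2).re) :
    IntegrableOn (fun t : ℝ =>
        Complex.exp (-(t : ℂ) * s ^ 2) * ((Real.sqrt t)⁻¹ : ℝ) *
          (Real.exp (-ℓ ^ 2 / (4 * t)) : ℝ))
      (Set.Ioi (0 : ℝ)) ∧
    ∫ t in Set.Ioi (0 : ℝ),
        Complex.exp (-(t : ℂ) * s ^ 2) * ((Real.sqrt t)⁻¹ : ℝ) *
          (Real.exp (-ℓ ^ 2 / (4 * t)) : ℝ)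
      = ((Real.sqrt Real.pi : ℂ) / s) * Complex.exp (-(ℓ : ℂ) * s) := by
  have hkernel (t : ℝ) : (((√t)⁻¹ : ℝ) : ℂ) * ((Real.exp (-ℓ ^ 2 / (4 * t)) : ℝ) : ℂ) =
      rescaledHeatKernel ℓ t := by
    rw [rescaledHeatKernel, Complex.ofReal_mul]
  simp_rw [mul_assoc, hkernel]
  refine ⟨integrableOn_laplaceTransform_integrand
    (measurable_rescaledHeatKernel ℓ).complex_ofReal.aestronglyMeasurable
    (fun _ => integrableOn_exp_neg_mul_mul_norm_rescaledHeatKernel ℓ) hs2, ?_⟩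
  rw [← laplaceTransform, laplaceTransform_rescaledHeatKernel hℓ hs2,
    Complex.sq_cpow_two_inv hs]
end
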